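/- arXiv:0912.3701 — 2 statements merged into one kernel-verified Lean document; each statement's English description precedes it below -/
import Mathlib

section
/- The Jucys–Murphy elements of the A-type Hecke algebra pairwise commute: for all i, j with 1 ≤ i, j ≤ n, y_i · y_j = y_j · y_i in H_n(q). -/
open FreeAlgebra in
/-- Defining relations of the A-type Hecke algebra `H_n(q)` on generators
`σ_1, …, σ_{n-1}` (generator `i : Fin (n-1)` represents `σ_{i+1}`). -/
inductive HeckeRel (n : ℕ) (q : ℂ) :
    FreeAlgebra ℂ (Fin (n - 1)) → FreeAlgebra ℂ (Fin (n - 1)) → Prop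
  | braid (i j : Fin (n - 1)) (h : (i : ℕ) + 1 = (j : ℕ)) :
      HeckeRel n q (ι ℂ i * ι ℂ j * ι ℂ i) (ι ℂ j * ι ℂ i * ι ℂ j)
  | comm (i j : Fin (n - 1)) (h : (i : ℕ) + 1 < (j : ℕ)) :
      HeckeRel n q (ι ℂ i * ι ℂ j) (ι ℂ j * ι ℂ i)
  | quad (i : Fin (n - 1)) :
      HeckeRel n q (ι ℂ i * ι ℂ i) (1 + (q - q⁻¹) • ι ℂ i)

/-- The A-type Hecke algebra `H_n(q)`. -/
abbrev HeckeAlgebra (n : ℕ) (q : ℂ) := RingQuot (HeckeRel n q)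

/-- The generator `σ_k` (1-based: valid for `1 ≤ k ≤ n-1`; junk value `1` otherwise). -/
noncomputable def heckeGen (n : ℕ) (q : ℂ) (k : ℕ) : HeckeAlgebra n q :=
  if h : k - 1 < n - 1 then RingQuot.mkAlgHom ℂ (HeckeRel n q) (FreeAlgebra.ι ℂ ⟨k - 1, h⟩)
  else 1

/-- The Jucys–Murphy elements, 1-based: `jm 1 = 1`, `jm (i+1) = σ_i * jm i * σ_i`. -/
noncomputable def jm (n : ℕ) (q : ℂ) : ℕ → HeckeAlgebra n q
  | 0 => 1
  | 1 => 1
  | (i + 2) => heckeGen n q (i + 1) * jm n q (i + 1) * heckeGen n q (i + 1)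

/-!
Since `y_{i+1} = σ_i y_i σ_i` and `σ_k` commutes with `σ_1, …, σ_{k-2}`, each `σ_k` commutes with
`y_1, …, y_{k-1}`; hence `y_i` commutes with `y_{j+1}` as soon as it commutes with `y_j` and `j > i`.
The remaining case of neighbours `y_{i+1} = a y a` and `y_{i+2} = b y_{i+1} b` (with `a = σ_i`,
`b = σ_{i+1}`, `y = y_i`) follows from the braid relation `a b a = b a b`, `y b = b y` and the
induction hypothesis `y (a y a) = (a y a) y`: both products reduce to `a b (y a y a) b a`.
-/

theorem commute_mul_mul_of_braid {M : Type*} [Monoid M] {a b y : M}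
    (hab : a * b * a = b * a * b) (hyb : Commute y b) (hy : Commute y (a * y * a)) :
    Commute (a * y * a) (b * (a * y * a) * b) := by
  have left : a * y * a * (b * (a * y * a) * b) = a * b * (y * (a * y * a)) * b * a :=
    calc a * y * a * (b * (a * y * a) * b)
        = a * y * (a * b * a) * y * a * b := by simp only [mul_assoc]
      _ = a * (y * b) * a * (b * y) * a * b := by rw [hab]; simp only [mul_assoc]
      _ = a * (b * y) * a * (y * b) * a * b := by rw [hyb.eq]
      _ = a * b * (y * a * y) * (b * a * b) := by simp only [mul_assoc]
      _ = a * b * (y * (a * y * a)) * b * a := by rw [← hab]; simp only [mul_assoc]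
  have right : b * (a * y * a) * b * (a * y * a) = a * b * (a * y * a * y) * b * a :=
    calc b * (a * y * a) * b * (a * y * a)
        = b * a * y * (a * b * a) * y * a := by simp only [mul_assoc]
      _ = b * a * (y * b) * a * (b * y) * a := by rw [hab]; simp only [mul_assoc]
      _ = b * a * (b * y) * a * (y * b) * a := by rw [hyb.eq]
      _ = b * a * b * (y * a * y) * b * a := by simp only [mul_assoc]
      _ = a * b * (a * y * a * y) * b * a := by rw [← hab]; simp only [mul_assoc]
  rw [Commute, SemiconjBy, left, right, hy.eq]

namespace HeckeAlgebra

variable {n : ℕ} {q : ℂ}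

theorem heckeGen_of_not_lt {k : ℕ} (h : ¬ k - 1 < n - 1) : heckeGen n q k = 1 :=
  dif_neg h

theorem heckeGen_braid {k : ℕ} (hk : 1 ≤ k) (hkn : k < n - 1) :
    heckeGen n q k * heckeGen n q (k + 1) * heckeGen n q k
      = heckeGen n q (k + 1) * heckeGen n q k * heckeGen n q (k + 1) := by
  have hk' : k - 1 < n - 1 := by omega
  have hk1 : k + 1 - 1 < n - 1 := by omega
  have hrel := RingQuot.mkAlgHom_rel ℂ
    (HeckeRel.braid (q := q) ⟨k - 1, hk'⟩ ⟨k + 1 - 1, hk1⟩ (by simp only; omega))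
  simpa only [heckeGen, dif_pos hk', dif_pos hk1, map_mul] using hrel

theorem commute_heckeGen_of_add_two_le {k m : ℕ} (hk : 1 ≤ k) (hkm : k + 2 ≤ m) :
    Commute (heckeGen n q k) (heckeGen n q m) := by
  by_cases hm : m - 1 < n - 1
  · have hk' : k - 1 < n - 1 := by omega
    have hrel := RingQuot.mkAlgHom_rel ℂ
      (HeckeRel.comm (q := q) ⟨k - 1, hk'⟩ ⟨m - 1, hm⟩ (by simp only; omega))
    simpa only [heckeGen, dif_pos hk', dif_pos hm, map_mul, commute_iff_eq] using hrel
  · rw [heckeGen_of_not_lt hm]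
    exact Commute.one_right _

theorem jm_succ {k : ℕ} (hk : 1 ≤ k) :
    jm n q (k + 1) = heckeGen n q k * jm n q k * heckeGen n q k := by
  obtain ⟨k, rfl⟩ := Nat.exists_eq_add_of_le' hk
  rfl

theorem commute_jm_heckeGen {k : ℕ} : ∀ {i : ℕ}, i < k → Commute (jm n q i) (heckeGen n q k)
  | 0, _ | 1, _ => Commute.one_left _
  | i + 2, hik =>
    have hσ : Commute (heckeGen n q (i + 1)) (heckeGen n q k) :=
      commute_heckeGen_of_add_two_le le_add_self (by omega)
    (hσ.mul_left (commute_jm_heckeGen (by omega))).mul_left hσ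

theorem commute_jm_jm_succ : ∀ i : ℕ, Commute (jm n q i) (jm n q (i + 1))
  | 0 | 1 => Commute.one_left _
  | i + 2 => by
    have ih := commute_jm_jm_succ (i + 1)
    rw [jm_succ (k := i + 2) le_add_self]
    by_cases hi : i + 2 < n
    · rw [jm_succ (k := i + 1) le_add_self] at ih ⊢
      exact commute_mul_mul_of_braid (heckeGen_braid le_add_self (by omega))
        (commute_jm_heckeGen (by omega)) ih
    · rw [heckeGen_of_not_lt (by omega), one_mul, mul_one]

theorem commute_jm_of_le {i j : ℕ} (hij : i ≤ j) : Commute (jm n q i) (jm n q j) := by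
  induction j, hij using Nat.le_induction with
  | base => exact Commute.refl _
  | succ j hij ih =>
    rcases hij.eq_or_lt with rfl | hlt
    · exact commute_jm_jm_succ i
    · have hσ := commute_jm_heckeGen (n := n) (q := q) hlt
      rw [jm_succ (by omega)]
      exact (hσ.mul_right ih).mul_right hσ

end HeckeAlgebra

theorem jm_commute_general (n : ℕ) (q : ℂ) (i j : ℕ) :
    jm n q i * jm n q j = jm n q j * jm n q i := by
  rcases le_total i j with h | h
  · exact (HeckeAlgebra.commute_jm_of_le h).eq
  · exact (HeckeAlgebra.commute_jm_of_le h).symm.eq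

/-- the Jucys–Murphy elements of `H_n(q)` pairwise commute. -/
theorem jm_commute (n : ℕ) (q : ℂ) (hn : 1 ≤ n) (hq : q ≠ 0) (i j : ℕ)
    (hi1 : 1 ≤ i) (hin : i ≤ n) (hj1 : 1 ≤ j) (hjn : j ≤ n) :
    jm n q i * jm n q j = jm n q j * jm n q i :=
  jm_commute_general n q i j
end

section
/- For every symmetric polynomial p ∈ ℂ[X_1, …, X_n], the element p(y_1, …, y_n) obtained by substituting the Jucys–Murphy elements lies in the center of the Hecke algebra H_n(q). -/
/-- Evaluation of a multivariate polynomial at the (pairwise commuting) Jucys–Murphy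
elements `y_1, …, y_n`: monomials are evaluated as ordered products
`y_1^{m 1} ⋯ y_n^{m n}` (the order is immaterial since the `y_i` commute). -/
noncomputable def jmEval (n : ℕ) (q : ℂ) (p : MvPolynomial (Fin n) ℂ) :
    HeckeAlgebra n q :=
  ∑ m ∈ p.support,
    MvPolynomial.coeff m p • (List.ofFn fun i : Fin n => jm n q ((i : ℕ) + 1) ^ m i).prod

/-!
The algebra `H_n(q)` is generated by `σ_1, …, σ_{n-1}`, so it suffices that `σ_k` commutes with
`p(y)`. The evaluation `X_i ↦ y_i` is an algebra map because the `y_i` commute pairwise. A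
polynomial fixed by swapping `X_k` and `X_{k+1}` lies in the subalgebra generated by
`X_k + X_{k+1}`, `X_k X_{k+1}` and the other variables: symmetrise `p · X_k^s X_{k+1}^t` by
induction on `p`, then divide `p + p` by `2`. Finally `σ_k` commutes with `y_j` for
`j ≠ k, k+1` (braid and far commutation relations), with `y_k + y_{k+1}` (quadratic relation,
as `y_{k+1} = σ_k y_k σ_k`) and with `y_k y_{k+1}` (because `y_k` and `y_{k+1}` commute).
-/

namespace MvPolynomial

section SwapInvariant

open Algebra

variable {R σ : Type*} [CommRing R] (i j : σ)

variable (R) in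
def swapGenerators : Set (MvPolynomial σ R) :=
  {X i + X j, X i * X j} ∪ X '' {k | k ≠ i ∧ k ≠ j}

lemma X_add_X_mem_adjoin_swapGenerators : X i + X j ∈ adjoin R (swapGenerators R i j) :=
  subset_adjoin (Or.inl (Set.mem_insert _ _))

lemma X_mul_X_mem_adjoin_swapGenerators : X i * X j ∈ adjoin R (swapGenerators R i j) :=
  subset_adjoin (Or.inl (Set.mem_insert_of_mem _ rfl))

lemma X_pow_add_X_pow_mem_adjoin_swapGenerators (d : ℕ) :
    X i ^ d + X j ^ d ∈ adjoin R (swapGenerators R i j) := by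
  induction d using Nat.twoStepInduction with
  | zero => simpa only [pow_zero] using add_mem (one_mem _) (one_mem _)
  | one => simpa only [pow_one] using X_add_X_mem_adjoin_swapGenerators i j
  | more d ih ih' =>
    have newton : (X i ^ (d + 2) + X j ^ (d + 2) : MvPolynomial σ R)
        = (X i + X j) * (X i ^ (d + 1) + X j ^ (d + 1)) - X i * X j * (X i ^ d + X j ^ d) := by
      ring
    rw [newton]
    exact sub_mem (mul_mem (X_add_X_mem_adjoin_swapGenerators i j) ih')
      (mul_mem (X_mul_X_mem_adjoin_swapGenerators i j) ih)

lemma X_pow_mul_X_pow_add_mem_adjoin_swapGenerators (s t : ℕ) :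
    X i ^ s * X j ^ t + X j ^ s * X i ^ t ∈ adjoin R (swapGenerators R i j) := by
  wlog hst : s ≤ t generalizing s t
  · simpa only [add_comm, mul_comm] using this t s (le_of_not_ge hst)
  obtain ⟨d, rfl⟩ := Nat.exists_eq_add_of_le hst
  have factor : (X i ^ s * X j ^ (s + d) + X j ^ s * X i ^ (s + d) : MvPolynomial σ R)
      = (X i * X j) ^ s * (X i ^ d + X j ^ d) := by
    ring
  rw [factor]
  exact mul_mem (Subalgebra.pow_mem _ (X_mul_X_mem_adjoin_swapGenerators i j) s)
    (X_pow_add_X_pow_mem_adjoin_swapGenerators i j d)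

variable [DecidableEq σ]

lemma add_rename_swap_mem_adjoin_swapGenerators (p : MvPolynomial σ R) :
    p + rename (Equiv.swap i j) p ∈ adjoin R (swapGenerators R i j) := by
  suffices h : ∀ s t, p * (X i ^ s * X j ^ t) + rename (Equiv.swap i j) (p * (X i ^ s * X j ^ t))
      ∈ adjoin R (swapGenerators R i j) by
    simpa only [pow_zero, mul_one] using h 0 0
  induction p using MvPolynomial.induction_on with
  | C a =>
    intro s t
    simp only [map_mul, map_pow, rename_C, rename_X, Equiv.swap_apply_left,
      Equiv.swap_apply_right, ← mul_add]
    exact mul_mem (Subalgebra.algebraMap_mem _ a)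
      (X_pow_mul_X_pow_add_mem_adjoin_swapGenerators i j s t)
  | add p p' hp hp' =>
    intro s t
    rw [add_mul, map_add, add_add_add_comm]
    exact add_mem (hp s t) (hp' s t)
  | mul_X p k hp =>
    intro s t
    by_cases hki : k = i
    · subst hki
      have e : p * X k * (X k ^ s * X j ^ t) = p * (X k ^ (s + 1) * X j ^ t) := by ring
      rw [e]
      exact hp (s + 1) t
    by_cases hkj : k = j
    · subst hkj
      have e : p * X k * (X i ^ s * X k ^ t) = p * (X i ^ s * X k ^ (t + 1)) := by ring
      rw [e]
      exact hp s (t + 1)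
    have hXk : X k ∈ adjoin R (swapGenerators R i j) :=
      subset_adjoin (Or.inr ⟨k, ⟨hki, hkj⟩, rfl⟩)
    have e : p * X k * (X i ^ s * X j ^ t) = X k * (p * (X i ^ s * X j ^ t)) := by ring
    rw [e, map_mul, rename_X, Equiv.swap_apply_of_ne_of_ne hki hkj, ← mul_add]
    exact mul_mem hXk (hp s t)

lemma mem_adjoin_swapGenerators_of_rename_swap_eq [Invertible (2 : R)] {p : MvPolynomial σ R}
    (hp : rename (Equiv.swap i j) p = p) : p ∈ adjoin R (swapGenerators R i j) := by
  have h := Subalgebra.smul_mem _ (add_rename_swap_mem_adjoin_swapGenerators i j p) (⅟2 : R)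
  rwa [hp, ← two_smul R p, smul_smul, invOf_mul_self, one_smul] at h

end SwapInvariant

section AevalOfCommute

open Algebra
open scoped IsMulCommutative

variable {R A σ : Type*} [CommSemiring R] [Semiring A] [Algebra R A]

noncomputable def aevalOfCommute (y : σ → A) (hy : ∀ i j, Commute (y i) (y j)) :
    MvPolynomial σ R →ₐ[R] A :=
  haveI : IsMulCommutative (adjoin R (Set.range y)) := by
    refine isMulCommutative_adjoin R ?_
    rintro _ ⟨i, rfl⟩ _ ⟨j, rfl⟩
    exact hy i j
  (adjoin R (Set.range y)).val.comp (aeval fun i => ⟨y i, subset_adjoin ⟨i, rfl⟩⟩)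

@[simp]
lemma aevalOfCommute_X (y : σ → A) (hy : ∀ i j, Commute (y i) (y j)) (i : σ) :
    aevalOfCommute (R := R) y hy (X i) = y i := by
  simp [aevalOfCommute]

lemma monomial_eq_smul_prod_ofFn {n : ℕ} (m : Fin n →₀ ℕ) (c : R) :
    monomial m c = c • (List.ofFn fun i => (X i : MvPolynomial (Fin n) R) ^ m i).prod := by
  rw [List.prod_ofFn, monomial_eq, Finsupp.prod_fintype _ _ fun _ => pow_zero _, smul_eq_C_mul]

lemma aevalOfCommute_eq_sum {n : ℕ} (y : Fin n → A) (hy : ∀ i j, Commute (y i) (y j))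
    (p : MvPolynomial (Fin n) R) :
    aevalOfCommute y hy p
      = ∑ m ∈ p.support, coeff m p • (List.ofFn fun i => y i ^ m i).prod := by
  conv_lhs => rw [p.as_sum]
  simp only [map_sum, monomial_eq_smul_prod_ofFn, map_smul, map_list_prod, List.map_ofFn,
    Function.comp_def, map_pow, aevalOfCommute_X]

end AevalOfCommute

end MvPolynomial

section BraidMonoid

variable {M : Type*} [Monoid M] {s t a : M}

lemma commute_conj_conj_of_braid (hb : s * t * s = t * s * t) (hta : Commute t a) :
    Commute s (t * (s * a * s) * t) := by
  have braid : ∀ x, s * (t * (s * x)) = t * (s * (t * x)) := fun x => by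
    simp only [← mul_assoc, hb]
  have braid' : t * (s * t) = s * (t * s) := by simp only [← mul_assoc, hb]
  unfold Commute SemiconjBy
  simp only [mul_assoc]
  rw [braid, hta.left_comm, braid']

lemma commute_conj_conj_conj_of_braid (hb : s * t * s = t * s * t) (hta : Commute t a)
    (ha : Commute a (s * a * s)) : Commute (s * a * s) (t * (s * a * s) * t) := by
  have braid : ∀ x, s * (t * (s * x)) = t * (s * (t * x)) := fun x => by
    simp only [← mul_assoc, hb]
  have braid' : t * (s * t) = s * (t * s) := by simp only [← mul_assoc, hb]
  have ha' : ∀ x, a * (s * (a * (s * x))) = s * (a * (s * (a * x))) := fun x => by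
    simpa only [mul_assoc] using congrArg (· * x) ha.eq
  -- both sides become `s t s a s a t s`
  unfold Commute SemiconjBy
  simp only [mul_assoc]
  conv_lhs => rw [braid, hta.left_comm, braid', ← hta.left_comm, ha']
  conv_rhs => rw [braid, hta.left_comm, ← hta.left_comm, ← braid]

lemma commute_add_conj_of_mul_self {R A : Type*} [CommSemiring R] [Semiring A] [Algebra R A]
    {s a : A} {c : R} (hs : s * s = 1 + c • s) : Commute s (a + s * a * s) := by
  have left : s * (a + s * a * s) = s * a + a * s + c • (s * a * s) := by
    rw [mul_add, ← mul_assoc, ← mul_assoc, hs]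
    simp only [add_mul, one_mul, smul_mul_assoc, add_assoc]
  have right : (a + s * a * s) * s = s * a + a * s + c • (s * a * s) := by
    rw [add_mul, mul_assoc _ s s, hs]
    simp only [mul_add, mul_one, mul_smul_comm]
    abel
  exact left.trans right.symm

lemma commute_mul_conj_of_commute (ha : Commute a (s * a * s)) : Commute s (a * (s * a * s)) := by
  unfold Commute SemiconjBy
  conv_rhs => rw [ha.eq]
  simp only [mul_assoc]

end BraidMonoid

section Hecke

variable {n : ℕ} {q : ℂ}

lemma heckeGen_of_not_lt {k : ℕ} (hk : ¬k - 1 < n - 1) : heckeGen n q k = 1 := dif_neg hk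

lemma heckeGen_eq_mkAlgHom {k : ℕ} (hk : k - 1 < n - 1) :
    heckeGen n q k = RingQuot.mkAlgHom ℂ (HeckeRel n q) (FreeAlgebra.ι ℂ ⟨k - 1, hk⟩) :=
  dif_pos hk

lemma heckeGen_mul_self {k : ℕ} (h1 : 1 ≤ k) (h2 : k < n) :
    heckeGen n q k * heckeGen n q k = 1 + (q - q⁻¹) • heckeGen n q k := by
  have hk : k - 1 < n - 1 := by omega
  rw [heckeGen_eq_mkAlgHom hk, ← map_mul,
    RingQuot.mkAlgHom_rel ℂ (HeckeRel.quad ⟨k - 1, hk⟩), map_add, map_one, map_smul]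

lemma commute_heckeGen_heckeGen {i j : ℕ} (hi : 1 ≤ i) (hij : i + 2 ≤ j) :
    Commute (heckeGen n q i) (heckeGen n q j) := by
  by_cases hj : j - 1 < n - 1
  · have hi' : i - 1 < n - 1 := by omega
    rw [heckeGen_eq_mkAlgHom hi', heckeGen_eq_mkAlgHom hj, Commute, SemiconjBy, ← map_mul,
      ← map_mul,
      RingQuot.mkAlgHom_rel ℂ (HeckeRel.comm ⟨i - 1, hi'⟩ ⟨j - 1, hj⟩ (by simp only; omega))]
  · rw [heckeGen_of_not_lt hj]
    exact Commute.one_right _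

lemma heckeGen_braid {k : ℕ} (h1 : 1 ≤ k) (h2 : k + 2 ≤ n) :
    heckeGen n q k * heckeGen n q (k + 1) * heckeGen n q k
      = heckeGen n q (k + 1) * heckeGen n q k * heckeGen n q (k + 1) := by
  have hk : k - 1 < n - 1 := by omega
  have hk' : k + 1 - 1 < n - 1 := by omega
  simp only [heckeGen_eq_mkAlgHom hk, heckeGen_eq_mkAlgHom hk', ← map_mul]
  exact RingQuot.mkAlgHom_rel ℂ
    (HeckeRel.braid ⟨k - 1, hk⟩ ⟨k + 1 - 1, hk'⟩ (by simp only; omega))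

lemma adjoin_range_heckeGen :
    Algebra.adjoin ℂ (Set.range fun i : Fin (n - 1) => heckeGen n q (i + 1)) = ⊤ := by
  have range_eq : (Set.range fun i : Fin (n - 1) => heckeGen n q (i + 1))
      = RingQuot.mkAlgHom ℂ (HeckeRel n q) '' Set.range (FreeAlgebra.ι ℂ) := by
    rw [← Set.range_comp]
    congr with i
    simp [heckeGen_eq_mkAlgHom (n := n) (k := i + 1) (by simp)]
  rw [range_eq, ← AlgHom.map_adjoin, FreeAlgebra.adjoin_range_ι, Algebra.map_top,
    AlgHom.range_eq_top]
  exact RingQuot.mkAlgHom_surjective ℂ _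

lemma jm_succ {k : ℕ} (hk : 1 ≤ k) :
    jm n q (k + 1) = heckeGen n q k * jm n q k * heckeGen n q k := by
  obtain ⟨i, rfl⟩ := Nat.exists_eq_add_of_le' hk
  rfl

lemma commute_heckeGen_jm_of_lt {j m : ℕ} (h : j < m) : Commute (heckeGen n q m) (jm n q j) := by
  induction j using Nat.twoStepInduction with
  | zero => exact Commute.one_right _
  | one => exact Commute.one_right _
  | more j _ ih =>
    have hg : Commute (heckeGen n q m) (heckeGen n q (j + 1)) :=
      (commute_heckeGen_heckeGen (by omega) (by omega)).symm
    exact (hg.mul_right (ih (by omega))).mul_right hg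

lemma jm_add_two {k : ℕ} (hk : 1 ≤ k) :
    jm n q (k + 2) = heckeGen n q (k + 1) * (heckeGen n q k * jm n q k * heckeGen n q k)
      * heckeGen n q (k + 1) := by
  rw [← jm_succ hk]
  rfl

lemma commute_heckeGen_jm_of_add_two_le {j m : ℕ} (hm : 1 ≤ m) (hmj : m + 2 ≤ j)
    (hj : j ≤ n) :
    Commute (heckeGen n q m) (jm n q j) := by
  induction j, hmj using Nat.le_induction with
  | base =>
    rw [jm_add_two hm]
    exact commute_conj_conj_of_braid (heckeGen_braid hm hj) (commute_heckeGen_jm_of_lt (by omega))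
  | succ j hmj ih =>
    rw [jm_succ (by omega)]
    have hg := commute_heckeGen_heckeGen (n := n) (q := q) hm hmj
    exact (hg.mul_right (ih (by omega))).mul_right hg

lemma commute_jm_jm_succ (k : ℕ) : Commute (jm n q k) (jm n q (k + 1)) := by
  rcases Nat.eq_zero_or_pos k with rfl | hk
  · exact Commute.one_left _
  induction k, hk using Nat.le_induction with
  | base => exact Commute.one_left _
  | succ k hk ih =>
    by_cases hkn : k + 2 ≤ n
    · rw [jm_succ hk] at ih
      rw [jm_succ hk, jm_add_two hk]
      exact commute_conj_conj_conj_of_braid (heckeGen_braid hk hkn)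
        (commute_heckeGen_jm_of_lt (by omega)) ih
    · have hσ : heckeGen n q (k + 1) = 1 := heckeGen_of_not_lt (by omega)
      rw [jm_succ (k := k + 1) (by omega), hσ, one_mul, mul_one]

lemma commute_jm_jm (i j : ℕ) : Commute (jm n q i) (jm n q j) := by
  wlog hij : i ≤ j generalizing i j
  · exact (this j i (by omega)).symm
  induction j, hij using Nat.le_induction with
  | base => exact Commute.refl _
  | succ j hij ih =>
    rcases hij.eq_or_lt with rfl | hij
    · exact commute_jm_jm_succ i
    rw [jm_succ (by omega)]
    have hg := (commute_heckeGen_jm_of_lt (n := n) (q := q) hij).symm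
    exact (hg.mul_right ih).mul_right hg

lemma commute_heckeGen_jm_add_jm_succ {k : ℕ} (h1 : 1 ≤ k) (h2 : k < n) :
    Commute (heckeGen n q k) (jm n q k + jm n q (k + 1)) := by
  rw [jm_succ h1]
  exact commute_add_conj_of_mul_self (heckeGen_mul_self h1 h2)

lemma commute_heckeGen_jm_mul_jm_succ {k : ℕ} (hk : 1 ≤ k) :
    Commute (heckeGen n q k) (jm n q k * jm n q (k + 1)) := by
  have h := commute_jm_jm_succ (n := n) (q := q) k
  rw [jm_succ hk] at h ⊢
  exact commute_mul_conj_of_commute h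

end Hecke

section JucysMurphyEvaluation

open MvPolynomial

variable {n : ℕ} {q : ℂ}

variable (n q) in
noncomputable def jmAeval : MvPolynomial (Fin n) ℂ →ₐ[ℂ] HeckeAlgebra n q :=
  aevalOfCommute (fun i : Fin n => jm n q (i + 1)) fun _ _ => commute_jm_jm _ _

lemma jmEval_eq_jmAeval (p : MvPolynomial (Fin n) ℂ) : jmEval n q p = jmAeval n q p :=
  (aevalOfCommute_eq_sum _ _ p).symm

lemma jmAeval_X (i : Fin n) : jmAeval n q (X i) = jm n q (i + 1) :=
  aevalOfCommute_X _ _ i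

lemma commute_heckeGen_jmEval {k : ℕ} (h1 : 1 ≤ k) (h2 : k < n) {p : MvPolynomial (Fin n) ℂ}
    (hp : p.IsSymmetric) : Commute (heckeGen n q k) (jmEval n q p) := by
  set i : Fin n := ⟨k - 1, by omega⟩
  set j : Fin n := ⟨k, h2⟩
  have hXi : jmAeval n q (X i) = jm n q k := by rw [jmAeval_X, Nat.sub_add_cancel h1]
  have hXj : jmAeval n q (X j) = jm n q (k + 1) := jmAeval_X j
  have hmem : jmAeval n q p ∈ Algebra.adjoin ℂ (jmAeval n q '' swapGenerators ℂ i j) := by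
    rw [Algebra.adjoin_image]
    exact ⟨p, mem_adjoin_swapGenerators_of_rename_swap_eq i j (hp (Equiv.swap i j)), rfl⟩
  rw [jmEval_eq_jmAeval]
  refine Algebra.commute_of_mem_adjoin_of_forall_mem_commute hmem ?_
  rintro _ ⟨g, (rfl | rfl) | ⟨l, ⟨hli, hlj⟩, rfl⟩, rfl⟩
  · rw [map_add, hXi, hXj]
    exact commute_heckeGen_jm_add_jm_succ h1 h2
  · rw [map_mul, hXi, hXj]
    exact commute_heckeGen_jm_mul_jm_succ h1
  · rw [jmAeval_X]
    have hli' : (l : ℕ) ≠ k - 1 := fun h => hli (Fin.ext h)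
    have hlj' : (l : ℕ) ≠ k := fun h => hlj (Fin.ext h)
    rcases Nat.lt_or_gt_of_ne hli' with hl | hl
    · exact commute_heckeGen_jm_of_lt (by omega)
    · exact commute_heckeGen_jm_of_add_two_le h1 (by omega) l.isLt

end JucysMurphyEvaluation

theorem symm_poly_jm_central_general (n : ℕ) (q : ℂ)
    (p : MvPolynomial (Fin n) ℂ) (hp : p.IsSymmetric) :
    jmEval n q p ∈ Subalgebra.center ℂ (HeckeAlgebra n q) := by
  refine Subalgebra.mem_center_iff.mpr fun g => ?_
  have hg : g ∈ Algebra.adjoin ℂ (Set.range fun i : Fin (n - 1) => heckeGen n q (i + 1)) := by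
    rw [adjoin_range_heckeGen]
    exact Algebra.mem_top
  refine (Algebra.commute_of_mem_adjoin_of_forall_mem_commute hg ?_).symm.eq
  rintro _ ⟨i, rfl⟩
  exact (commute_heckeGen_jmEval (by omega) (by omega) hp).symm

/-- every symmetric polynomial evaluated at the Jucys–Murphy elements
is central in `H_n(q)`. -/
theorem symm_poly_jm_central (n : ℕ) (q : ℂ) (hn : 1 ≤ n) (hq : q ≠ 0)
    (p : MvPolynomial (Fin n) ℂ) (hp : p.IsSymmetric) :
    jmEval n q p ∈ Subalgebra.center ℂ (HeckeAlgebra n q) :=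
  symm_poly_jm_central_general n q p hp
end
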